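/- Let G₁, G₂ ⊆ [0,1]² be disjoint closed convex sets, c₁, c₂ ∈ ℝ, and f = c₁·1_{G₁} + c₂·1_{G₂}. Define f_a(x,y) = ∫₀¹∫₀¹ β_α(t,x) β_{α′}(s,y) f(t,s) dt ds for a = (α, α′) ∈ ℕ₊ × ℕ₊. Then f_a converges to f in L¹([0,1]²) as α, α′ → ∞; that is, ∫_{[0,1]²} |f_a(x,y) − f(x,y)| dx dy → 0. -/

import Mathlib

open MeasureTheory Filter

/-- The Beta function `B(u,v) = Γ(u)Γ(v)/Γ(u+v)`. -/
noncomputable def betaFn (u v : ℝ) : ℝ :=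
  Real.Gamma u * Real.Gamma v / Real.Gamma (u + v)

/-- The beta kernel `β_α(t,x) = t^⌊αx⌋ (1−t)^(α−⌊αx⌋) / B(⌊αx⌋+1, α−⌊αx⌋+1)`. -/
noncomputable def betaKer (α : ℕ) (x t : ℝ) : ℝ :=
  t ^ ⌊(α : ℝ) * x⌋₊ * (1 - t) ^ (α - ⌊(α : ℝ) * x⌋₊) /
    betaFn ((⌊(α : ℝ) * x⌋₊ : ℝ) + 1) (((α - ⌊(α : ℝ) * x⌋₊ : ℕ) : ℝ) + 1)

/-- Moment-recovered approximation of a function `f`: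
`f_a(x,y) = ∫₀¹∫₀¹ β_α(t,x) β_{α′}(s,y) f(t,s) dt ds`. -/
noncomputable def kerApprox (f : ℝ × ℝ → ℝ) (α α' : ℕ) (x y : ℝ) : ℝ :=
  ∫ t in (0:ℝ)..1, ∫ s in (0:ℝ)..1, betaKer α x t * betaKer α' y s * f (t, s)

/-!
The beta kernel `β_α(·, x)` is a probability density on `[0, 1]` whose second moment about `x`
is at most `2/(α+1)`: its mean `(⌊αx⌋+1)/(α+2)` lies within `2/(α+2)` of `x`. Hence
`f_a(x, y)` averages `f` against a product probability density concentrated at `(x, y)`, and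
at every continuity point of a bounded `f` it converges to `f(x, y)`: near the point
`|f - f(x, y)| < ε`, and away from it the bound `2 sup|f|` is beaten by the second moment
(Chebyshev). The frontier of a convex set is Lebesgue-null, so `c₁ 1_{G₁} + c₂ 1_{G₂}` is
continuous almost everywhere, and dominated convergence turns pointwise into `L¹` convergence.
-/

open Set

local notation "𝕀" => Set.Icc (0:ℝ) 1

lemma abs_integral_mul_sub_le {X : Type*} [MeasurableSpace X] {μ : Measure X} {K g φ : X → ℝ}
    {c : ℝ} (hK : ∀ᵐ z ∂μ, 0 ≤ K z) (hK1 : ∫ z, K z ∂μ = 1) (hKi : Integrable K μ)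
    (hKg : Integrable (fun z => K z * g z) μ) (hKφ : Integrable (fun z => K z * φ z) μ)
    (hgφ : ∀ᵐ z ∂μ, |g z - c| ≤ φ z) :
    |∫ z, K z * g z ∂μ - c| ≤ ∫ z, K z * φ z ∂μ := by
  have hc : ∫ z, K z * g z ∂μ - c = ∫ z, K z * (g z - c) ∂μ := by
    simp_rw [mul_sub, integral_sub hKg (hKi.mul_const c), integral_mul_const, hK1, one_mul]
  have hKgc : Integrable (fun z => K z * (g z - c)) μ := by
    simp_rw [mul_sub]; exact hKg.sub (hKi.mul_const c)
  rw [hc]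
  refine abs_integral_le_integral_abs.trans (integral_mono_ae hKgc.abs hKφ ?_)
  filter_upwards [hK, hgφ] with z hKz hz
  rw [abs_mul, abs_of_nonneg hKz]
  exact mul_le_mul_of_nonneg_left hz hKz

lemma exists_abs_sub_le_add_mul_dist_sq {X : Type*} [PseudoMetricSpace X] {g : X → ℝ} {M : ℝ}
    (hgM : ∀ q, |g q| ≤ M) {p : X} (hp : ContinuousAt g p) {ε : ℝ} (hε : 0 < ε) :
    ∃ D, 0 ≤ D ∧ ∀ q, |g q - g p| ≤ ε + D * dist q p ^ 2 := by
  obtain ⟨δ, hδ, hg⟩ := Metric.continuousAt_iff.1 hp ε hε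
  have hM : 0 ≤ M := (abs_nonneg _).trans (hgM p)
  refine ⟨2 * M / δ ^ 2, by positivity, fun q => ?_⟩
  rcases lt_or_ge (dist q p) δ with hq | hq
  · have := (hg hq).le
    rw [Real.dist_eq] at this
    have : 0 ≤ 2 * M / δ ^ 2 * dist q p ^ 2 := by positivity
    linarith
  · calc |g q - g p| ≤ |g q| + |g p| := abs_sub _ _
      _ ≤ 2 * M / δ ^ 2 * δ ^ 2 := by
        rw [div_mul_cancel₀ _ (by positivity)]; linarith [hgM q, hgM p]
      _ ≤ ε + 2 * M / δ ^ 2 * dist q p ^ 2 := by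
        have : 2 * M / δ ^ 2 * δ ^ 2 ≤ 2 * M / δ ^ 2 * dist q p ^ 2 := by gcongr
        linarith

lemma Prod.dist_sq_le_sq_add_sq (q p : ℝ × ℝ) :
    dist q p ^ 2 ≤ (q.1 - p.1) ^ 2 + (q.2 - p.2) ^ 2 := by
  rw [Prod.dist_eq, Real.dist_eq, Real.dist_eq]
  rcases le_total |q.1 - p.1| |q.2 - p.2| with h | h
  · rw [max_eq_right h, sq_abs]; nlinarith
  · rw [max_eq_left h, sq_abs]; nlinarith

lemma setIntegral_Icc_eq_intervalIntegral (g : ℝ → ℝ) : ∫ t in 𝕀, g t = ∫ t in (0:ℝ)..1, g t := by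
  rw [intervalIntegral.integral_of_le zero_le_one, integral_Icc_eq_integral_Ioc]

lemma Continuous.integrableOn_unitSquare {g : ℝ × ℝ → ℝ} (hg : Continuous g) :
    IntegrableOn g (𝕀 ×ˢ 𝕀) :=
  hg.continuousOn.integrableOn_compact (isCompact_Icc.prod isCompact_Icc)

lemma betaFn_pos {u v : ℝ} (hu : 0 < u) (hv : 0 < v) : 0 < betaFn u v :=
  ProbabilityTheory.beta_pos hu hv

lemma betaFn_add_one_left {u v : ℝ} (hu : 0 < u) (hv : 0 < v) :
    betaFn (u + 1) v = u / (u + v) * betaFn u v := by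
  have huv : 0 < u + v := by linarith
  rw [betaFn, betaFn, add_right_comm, Real.Gamma_add_one hu.ne', Real.Gamma_add_one huv.ne']
  field_simp [(Real.Gamma_pos_of_pos huv).ne']

lemma integral_pow_mul_one_sub_pow (m n : ℕ) :
    ∫ t in (0:ℝ)..1, t ^ m * (1 - t) ^ n = betaFn (m + 1) (n + 1) := by
  apply Complex.ofReal_injective
  have hB : (betaFn (m + 1) (n + 1) : ℂ) = Complex.betaIntegral (m + 1) (n + 1) := by
    rw [Complex.betaIntegral_eq_Gamma_mul_div _ _ (by simp; positivity) (by simp; positivity),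
      betaFn]
    push_cast [← Complex.Gamma_ofReal]
    ring_nf
  rw [hB, Complex.betaIntegral, ← intervalIntegral.integral_ofReal]
  push_cast
  simp [Complex.cpow_natCast]

/-- The left side is the second moment about `x` of the Beta(k+1, a-k+1) distribution: its
variance plus the squared distance from `x` of its mean `(k+1)/(a+2)`. -/
lemma beta_second_moment_le {a k x : ℝ} (hk : 0 ≤ k) (hka : k ≤ a * x) (hak : a * x ≤ k + 1)
    (hkA : k ≤ a) (hx : x ∈ 𝕀) :
    (k + 2) / (a + 3) * ((k + 1) / (a + 2)) - 2 * x * ((k + 1) / (a + 2)) + x ^ 2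
      ≤ 2 / (a + 1) := by
  have ha : 0 ≤ a := hk.trans hkA
  obtain ⟨hx0, hx1⟩ := hx
  have e : (k + 2) / (a + 3) * ((k + 1) / (a + 2)) - 2 * x * ((k + 1) / (a + 2)) + x ^ 2
      = (k + 1) * (a + 1 - k) / ((a + 2) ^ 2 * (a + 3))
        + ((k + 1) - (a + 2) * x) ^ 2 / (a + 2) ^ 2 := by
    field_simp; ring
  have hb : ((k + 1) - (a + 2) * x) ^ 2 ≤ 4 := by nlinarith
  have hv : (k + 1) * (a + 1 - k) ≤ (a + 2) ^ 2 / 4 := by nlinarith [sq_nonneg (a - 2 * k)]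
  have t1 : (k + 1) * (a + 1 - k) / ((a + 2) ^ 2 * (a + 3)) ≤ 1 / (4 * (a + 3)) := by
    rw [div_le_div_iff₀ (by positivity) (by positivity)]; nlinarith
  have t2 : ((k + 1) - (a + 2) * x) ^ 2 / (a + 2) ^ 2 ≤ 4 / (a + 2) ^ 2 := by gcongr
  have t3 : 1 / (4 * (a + 3)) + 4 / (a + 2) ^ 2 ≤ 2 / (a + 1) := by
    rw [div_add_div _ _ (by positivity) (by positivity),
      div_le_div_iff₀ (by positivity) (by positivity)]
    nlinarith [mul_nonneg ha ha, mul_nonneg (mul_nonneg ha ha) ha]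
  linarith

section Kernel

variable (α : ℕ) (x : ℝ)

@[fun_prop]
lemma continuous_betaKer : Continuous (betaKer α x) := by
  unfold betaKer; fun_prop

lemma betaKer_nonneg {t : ℝ} (ht : t ∈ 𝕀) : 0 ≤ betaKer α x t := by
  have := betaFn_pos (u := (⌊(α : ℝ) * x⌋₊ : ℝ) + 1) (v := ((α - ⌊(α : ℝ) * x⌋₊ : ℕ) : ℝ) + 1)
    (by positivity) (by positivity)
  have := ht.1
  have : 0 ≤ 1 - t := sub_nonneg.2 ht.2
  unfold betaKer
  positivity

lemma integral_betaKer_mul_pow (j : ℕ) :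
    ∫ t in (0:ℝ)..1, betaKer α x t * t ^ j =
      betaFn ((⌊(α : ℝ) * x⌋₊ : ℝ) + j + 1) (((α - ⌊(α : ℝ) * x⌋₊ : ℕ) : ℝ) + 1) /
        betaFn ((⌊(α : ℝ) * x⌋₊ : ℝ) + 1) (((α - ⌊(α : ℝ) * x⌋₊ : ℕ) : ℝ) + 1) := by
  simp_rw [betaKer, div_mul_eq_mul_div, mul_right_comm _ _ (_ ^ j), ← pow_add]
  rw [intervalIntegral.integral_div, integral_pow_mul_one_sub_pow]
  push_cast
  ring_nf

lemma integral_betaKer : ∫ t in (0:ℝ)..1, betaKer α x t = 1 := by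
  have h := integral_betaKer_mul_pow α x 0
  simp only [pow_zero, mul_one, Nat.cast_zero, add_zero] at h
  rw [h, div_self (betaFn_pos (by positivity) (by positivity)).ne']

variable {x}

lemma Nat.floor_mul_le_of_le_one (hx : x ≤ 1) : ⌊(α : ℝ) * x⌋₊ ≤ α :=
  Nat.floor_le_of_le (mul_le_of_le_one_right α.cast_nonneg hx)

lemma integral_betaKer_mul_self (hx : x ≤ 1) :
    ∫ t in (0:ℝ)..1, betaKer α x t * t = (⌊(α : ℝ) * x⌋₊ + 1) / (α + 2) := by
  have hB := betaFn_pos (u := (⌊(α : ℝ) * x⌋₊ : ℝ) + 1)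
    (v := ((α - ⌊(α : ℝ) * x⌋₊ : ℕ) : ℝ) + 1) (by positivity) (by positivity)
  have h := integral_betaKer_mul_pow α x 1
  simp only [pow_one, Nat.cast_one] at h
  rw [h, add_right_comm _ (1 : ℝ), betaFn_add_one_left (by positivity) (by positivity)]
  field_simp
  push_cast [Nat.floor_mul_le_of_le_one α hx]
  ring

lemma integral_betaKer_mul_sq (hx : x ≤ 1) :
    ∫ t in (0:ℝ)..1, betaKer α x t * t ^ 2 =
      (⌊(α : ℝ) * x⌋₊ + 2) / (α + 3) * ((⌊(α : ℝ) * x⌋₊ + 1) / (α + 2)) := by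
  have hB := betaFn_pos (u := (⌊(α : ℝ) * x⌋₊ : ℝ) + 1)
    (v := ((α - ⌊(α : ℝ) * x⌋₊ : ℕ) : ℝ) + 1) (by positivity) (by positivity)
  rw [integral_betaKer_mul_pow, show (⌊(α : ℝ) * x⌋₊ : ℝ) + (2 : ℕ) + 1
      = ⌊(α : ℝ) * x⌋₊ + 1 + 1 + 1 by push_cast; ring,
    betaFn_add_one_left (by positivity) (by positivity),
    betaFn_add_one_left (by positivity) (by positivity)]
  field_simp
  push_cast [Nat.floor_mul_le_of_le_one α hx]
  ring

lemma integral_betaKer_mul_sub_sq_le (hx : x ∈ 𝕀) :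
    ∫ t in (0:ℝ)..1, betaKer α x t * (t - x) ^ 2 ≤ 2 / (α + 1) := by
  have hi : ∀ g : ℝ → ℝ, Continuous g → IntervalIntegrable g volume 0 1 :=
    fun g hg => hg.intervalIntegrable 0 1
  have hexp : (fun t => betaKer α x t * (t - x) ^ 2) = fun t =>
      betaKer α x t * t ^ 2 - 2 * x * (betaKer α x t * t) + x ^ 2 * betaKer α x t := by
    funext t; ring
  rw [hexp, intervalIntegral.integral_add ((hi _ (by fun_prop)).sub (hi _ (by fun_prop)))
      (hi _ (by fun_prop)), intervalIntegral.integral_sub (hi _ (by fun_prop)) (hi _ (by fun_prop)),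
    intervalIntegral.integral_const_mul, intervalIntegral.integral_const_mul,
    integral_betaKer_mul_sq α hx.2, integral_betaKer_mul_self α hx.2, integral_betaKer, mul_one]
  exact beta_second_moment_le (Nat.cast_nonneg _) (Nat.floor_le (by have := hx.1; positivity))
    (Nat.lt_floor_add_one _).le (by exact_mod_cast Nat.floor_mul_le_of_le_one α hx.2) hx

end Kernel

section Square

variable (α α' : ℕ) (x y : ℝ)

lemma integrableOn_betaKer_mul_betaKer_mul {g : ℝ × ℝ → ℝ} {M : ℝ}
    (hg : AEStronglyMeasurable g (volume.restrict (𝕀 ×ˢ 𝕀))) (hgM : ∀ p, |g p| ≤ M) :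
    IntegrableOn (fun p => betaKer α x p.1 * betaKer α' y p.2 * g p) (𝕀 ×ˢ 𝕀) :=
  (Continuous.integrableOn_unitSquare (by fun_prop)).mul_bdd hg (Eventually.of_forall hgM)

lemma kerApprox_eq_setIntegral {f : ℝ × ℝ → ℝ} {M : ℝ}
    (hf : AEStronglyMeasurable f (volume.restrict (𝕀 ×ˢ 𝕀))) (hfM : ∀ p, |f p| ≤ M) :
    kerApprox f α α' x y = ∫ p in 𝕀 ×ˢ 𝕀, betaKer α x p.1 * betaKer α' y p.2 * f p := by
  have hi := integrableOn_betaKer_mul_betaKer_mul α α' x y hf hfM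
  rw [Measure.volume_eq_prod] at hi ⊢
  simp_rw [setIntegral_prod _ hi, setIntegral_Icc_eq_intervalIntegral, kerApprox]

lemma setIntegral_betaKer_mul_betaKer :
    ∫ p in 𝕀 ×ˢ 𝕀, betaKer α x p.1 * betaKer α' y p.2 = 1 := by
  rw [Measure.volume_eq_prod, setIntegral_prod_mul, setIntegral_Icc_eq_intervalIntegral,
    setIntegral_Icc_eq_intervalIntegral, integral_betaKer, integral_betaKer, one_mul]

variable {x y}

lemma setIntegral_betaKer_mul_betaKer_mul_sq_le (hx : x ∈ 𝕀) (hy : y ∈ 𝕀) :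
    ∫ p in 𝕀 ×ˢ 𝕀, betaKer α x p.1 * betaKer α' y p.2 * ((p.1 - x) ^ 2 + (p.2 - y) ^ 2)
      ≤ 2 / (α + 1) + 2 / (α' + 1) := by
  have hsplit : (fun p : ℝ × ℝ =>
      betaKer α x p.1 * betaKer α' y p.2 * ((p.1 - x) ^ 2 + (p.2 - y) ^ 2))
      = fun p => betaKer α x p.1 * (p.1 - x) ^ 2 * betaKer α' y p.2
        + betaKer α x p.1 * (betaKer α' y p.2 * (p.2 - y) ^ 2) := by
    funext p; ring
  rw [hsplit, integral_add (Continuous.integrableOn_unitSquare (by fun_prop))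
      (Continuous.integrableOn_unitSquare (by fun_prop)), Measure.volume_eq_prod,
    setIntegral_prod_mul (fun t => betaKer α x t * (t - x) ^ 2),
    setIntegral_prod_mul _ (fun s => betaKer α' y s * (s - y) ^ 2)]
  simp_rw [setIntegral_Icc_eq_intervalIntegral, integral_betaKer, mul_one, one_mul]
  gcongr
  · exact integral_betaKer_mul_sub_sq_le α hx
  · exact integral_betaKer_mul_sub_sq_le α' hy

end Square

lemma measurable_kerApprox (f : ℝ × ℝ → ℝ) (α α' : ℕ) :
    Measurable fun p : ℝ × ℝ => kerApprox f α α' p.1 p.2 := by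
  -- `kerApprox f α α' x y` depends on `(x, y)` only through `(⌊α x⌋₊, ⌊α' y⌋₊) ∈ ℕ × ℕ`.
  have heq : (fun p : ℝ × ℝ => kerApprox f α α' p.1 p.2)
      = (fun q : ℕ × ℕ => ∫ t in (0:ℝ)..1, ∫ s in (0:ℝ)..1,
          (t ^ q.1 * (1 - t) ^ (α - q.1) / betaFn ((q.1 : ℝ) + 1) (((α - q.1 : ℕ) : ℝ) + 1))
          * (s ^ q.2 * (1 - s) ^ (α' - q.2) / betaFn ((q.2 : ℝ) + 1) (((α' - q.2 : ℕ) : ℝ) + 1))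
          * f (t, s))
        ∘ (fun p : ℝ × ℝ => (⌊(α : ℝ) * p.1⌋₊, ⌊(α' : ℝ) * p.2⌋₊)) := rfl
  rw [heq]
  exact (measurable_of_countable _).comp
    ((Nat.measurable_floor.comp (measurable_const.mul measurable_fst)).prodMk
      (Nat.measurable_floor.comp (measurable_const.mul measurable_snd)))

section Convergence

variable {f : ℝ × ℝ → ℝ} {M : ℝ} (hf : AEStronglyMeasurable f (volume.restrict (𝕀 ×ˢ 𝕀)))
  (hfM : ∀ p, |f p| ≤ M)
include hf hfM

lemma abs_kerApprox_sub_le (α α' : ℕ) {x y c ε D : ℝ} (hx : x ∈ 𝕀) (hy : y ∈ 𝕀) (hD : 0 ≤ D)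
    (hfc : ∀ q ∈ 𝕀 ×ˢ 𝕀, |f q - c| ≤ ε + D * ((q.1 - x) ^ 2 + (q.2 - y) ^ 2)) :
    |kerApprox f α α' x y - c| ≤ ε + D * (2 / (α + 1) + 2 / (α' + 1)) := by
  have hS : MeasurableSet (𝕀 ×ˢ 𝕀) := measurableSet_Icc.prod measurableSet_Icc
  have hK : ∀ᵐ p ∂(volume.restrict (𝕀 ×ˢ 𝕀)), 0 ≤ betaKer α x p.1 * betaKer α' y p.2 :=
    ae_restrict_of_forall_mem hS fun p hp =>
      mul_nonneg (betaKer_nonneg α x hp.1) (betaKer_nonneg α' y hp.2)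
  have hK1 := setIntegral_betaKer_mul_betaKer α α' x y
  rw [kerApprox_eq_setIntegral α α' x y hf hfM]
  calc _ ≤ ∫ p in 𝕀 ×ˢ 𝕀,
        betaKer α x p.1 * betaKer α' y p.2 * (ε + D * ((p.1 - x) ^ 2 + (p.2 - y) ^ 2)) :=
        abs_integral_mul_sub_le hK hK1 (Continuous.integrableOn_unitSquare (by fun_prop))
          (integrableOn_betaKer_mul_betaKer_mul α α' x y hf hfM)
          (Continuous.integrableOn_unitSquare (by fun_prop)) (ae_restrict_of_forall_mem hS hfc)
    _ = ε + D * ∫ p in 𝕀 ×ˢ 𝕀,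
        betaKer α x p.1 * betaKer α' y p.2 * ((p.1 - x) ^ 2 + (p.2 - y) ^ 2) := by
      have e : ∀ p : ℝ × ℝ, betaKer α x p.1 * betaKer α' y p.2 *
          (ε + D * ((p.1 - x) ^ 2 + (p.2 - y) ^ 2)) = betaKer α x p.1 * betaKer α' y p.2 * ε +
          D * (betaKer α x p.1 * betaKer α' y p.2 * ((p.1 - x) ^ 2 + (p.2 - y) ^ 2)) := by
        intro p; ring
      simp_rw [e]
      rw [integral_add (Continuous.integrableOn_unitSquare (by fun_prop))
          (Continuous.integrableOn_unitSquare (by fun_prop)),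
        integral_mul_const, integral_const_mul, hK1, one_mul]
    _ ≤ ε + D * (2 / (α + 1) + 2 / (α' + 1)) := by
      gcongr
      exact setIntegral_betaKer_mul_betaKer_mul_sq_le α α' hx hy

lemma tendsto_kerApprox_of_continuousAt {p : ℝ × ℝ} (hp : p ∈ 𝕀 ×ˢ 𝕀) (hfp : ContinuousAt f p) :
    Tendsto (fun a : ℕ × ℕ => kerApprox f a.1 a.2 p.1 p.2) atTop (nhds (f p)) := by
  refine Metric.tendsto_nhds.2 fun ε hε => ?_
  obtain ⟨D, hD, hfD⟩ := exists_abs_sub_le_add_mul_dist_sq hfM hfp (half_pos hε)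
  have hrate : Tendsto (fun a : ℕ × ℕ => D * (2 / ((a.1 : ℝ) + 1) + 2 / ((a.2 : ℝ) + 1)))
      atTop (nhds 0) := by
    have h : Tendsto (fun n : ℕ => 2 / ((n : ℝ) + 1)) atTop (nhds 0) := by
      simpa [div_eq_mul_inv] using tendsto_one_div_add_atTop_nhds_zero_nat.const_mul (2 : ℝ)
    rw [← prod_atTop_atTop_eq]
    simpa using ((h.comp tendsto_fst).add (h.comp tendsto_snd)).const_mul D
  filter_upwards [hrate.eventually (gt_mem_nhds (half_pos hε))] with a ha
  have := abs_kerApprox_sub_le hf hfM a.1 a.2 hp.1 hp.2 hD (c := f p) fun q _ =>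
    (hfD q).trans (by gcongr; exact Prod.dist_sq_le_sq_add_sq q p)
  rw [Real.dist_eq]
  linarith

lemma tendsto_integral_abs_kerApprox_sub
    (hfc : ∀ᵐ p ∂(volume.restrict (𝕀 ×ˢ 𝕀)), ContinuousAt f p) :
    Tendsto (fun a : ℕ × ℕ => ∫ p in 𝕀 ×ˢ 𝕀, |kerApprox f a.1 a.2 p.1 p.2 - f p|)
      atTop (nhds 0) := by
  have hS : MeasurableSet (𝕀 ×ˢ 𝕀) := measurableSet_Icc.prod measurableSet_Icc
  have hbound (a : ℕ × ℕ) : ∀ p ∈ 𝕀 ×ˢ 𝕀, ‖|kerApprox f a.1 a.2 p.1 p.2 - f p|‖ ≤ 2 * M := by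
    intro p hp
    have := abs_kerApprox_sub_le hf hfM a.1 a.2 hp.1 hp.2 le_rfl (c := 0)
      fun q _ => by simpa using hfM q
    simp only [sub_zero, zero_mul, add_zero] at this
    rw [norm_abs_eq_norm, Real.norm_eq_abs, two_mul]
    exact (abs_sub _ _).trans (add_le_add this (hfM p))
  have hlim : ∀ᵐ p ∂(volume.restrict (𝕀 ×ˢ 𝕀)),
      Tendsto (fun a : ℕ × ℕ => |kerApprox f a.1 a.2 p.1 p.2 - f p|) atTop (nhds 0) := by
    filter_upwards [hfc, ae_restrict_mem hS] with p hpc hp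
    simpa using ((tendsto_kerApprox_of_continuousAt hf hfM hp hpc).sub_const (f p)).abs
  have hint : Integrable (fun _ : ℝ × ℝ => 2 * M) (volume.restrict (𝕀 ×ˢ 𝕀)) :=
    integrableOn_const (isCompact_Icc.prod isCompact_Icc).measure_lt_top.ne
  simpa using tendsto_integral_filter_of_dominated_convergence
    (F := fun (a : ℕ × ℕ) p => |kerApprox f a.1 a.2 p.1 p.2 - f p|) (fun _ => 2 * M)
    (Eventually.of_forall fun a =>
      ((measurable_kerApprox f a.1 a.2).aestronglyMeasurable.sub hf).norm)
    (Eventually.of_forall fun a => ae_restrict_of_forall_mem hS (hbound a)) hint hlim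

end Convergence

theorem stmt_9_general (G₁ G₂ : Set (ℝ × ℝ))
    (hG₁cv : Convex ℝ G₁)
    (hG₂cv : Convex ℝ G₂)
    (c₁ c₂ : ℝ) (f : ℝ × ℝ → ℝ)
    (hf : f = fun p => c₁ * Set.indicator G₁ (fun _ => (1:ℝ)) p +
      c₂ * Set.indicator G₂ (fun _ => (1:ℝ)) p) :
    Tendsto (fun a : ℕ × ℕ =>
        ∫ p in Set.Icc (0:ℝ) 1 ×ˢ Set.Icc (0:ℝ) 1,
          |kerApprox f a.1 a.2 p.1 p.2 - f p|)
      atTop (nhds 0) := by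
  subst hf
  have hind (G : Set (ℝ × ℝ)) (p : ℝ × ℝ) : |G.indicator (fun _ => (1:ℝ)) p| ≤ 1 := by
    by_cases h : p ∈ G <;> simp [h]
  have hmeas {G : Set (ℝ × ℝ)} (hG : Convex ℝ G) :
      AEStronglyMeasurable (G.indicator fun _ => (1:ℝ)) volume :=
    aestronglyMeasurable_const.indicator₀ (hG.nullMeasurableSet volume)
  refine tendsto_integral_abs_kerApprox_sub (M := |c₁| + |c₂|)
    (((hmeas hG₁cv).const_mul c₁).add ((hmeas hG₂cv).const_mul c₂)).restrict (fun p => ?_) ?_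
  · refine (abs_add_le _ _).trans (add_le_add ?_ ?_) <;>
      rw [abs_mul] <;> exact mul_le_of_le_one_right (abs_nonneg _) (hind _ p)
  · refine ae_restrict_of_ae ?_
    filter_upwards [measure_eq_zero_iff_ae_notMem.1 (hG₁cv.addHaar_frontier volume),
      measure_eq_zero_iff_ae_notMem.1 (hG₂cv.addHaar_frontier volume)] with p hp₁ hp₂
    exact ((continuousOn_const.continuousAt_indicator hp₁).const_mul c₁).add
      ((continuousOn_const.continuousAt_indicator hp₂).const_mul c₂)

theorem stmt_9 (G₁ G₂ : Set (ℝ × ℝ))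
    (hG₁cl : IsClosed G₁) (hG₁cv : Convex ℝ G₁)
    (hG₂cl : IsClosed G₂) (hG₂cv : Convex ℝ G₂)
    (hG₁sub : G₁ ⊆ Set.Icc (0:ℝ) 1 ×ˢ Set.Icc (0:ℝ) 1)
    (hG₂sub : G₂ ⊆ Set.Icc (0:ℝ) 1 ×ˢ Set.Icc (0:ℝ) 1)
    (hdisj : Disjoint G₁ G₂)
    (c₁ c₂ : ℝ) (f : ℝ × ℝ → ℝ)
    (hf : f = fun p => c₁ * Set.indicator G₁ (fun _ => (1:ℝ)) p +
      c₂ * Set.indicator G₂ (fun _ => (1:ℝ)) p) :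
    Tendsto (fun a : ℕ × ℕ =>
        ∫ p in Set.Icc (0:ℝ) 1 ×ˢ Set.Icc (0:ℝ) 1,
          |kerApprox f a.1 a.2 p.1 p.2 - f p|)
      atTop (nhds 0) :=
  stmt_9_general G₁ G₂ hG₁cv hG₂cv c₁ c₂ f hf
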